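/- In the polynomial ring R = ℝ[x_{11}, x_{12}, x_{21}, x_{22}, y_{11}, y_{12}, y_{21}, y_{22}], the ideal generated by the fourteen polynomials x_{11}x_{12} + y_{11}y_{12} + x_{21}x_{22} + y_{21}y_{22}; x_{11}y_{12} − x_{12}y_{11} + x_{21}y_{22} − x_{22}y_{21}; x_{ij}² + y_{ij}² − 1/2 for 1 ≤ i, j ≤ 2; (x_{11}+x_{21})² + (y_{11}+y_{21})² − 1; (x_{11}−x_{21})² + (y_{11}−y_{21})² − 1; (x_{12}+x_{22})² + (y_{12}+y_{22})² − 1; (x_{12}−x_{22})² + (y_{12}−y_{22})² − 1; (x_{11}+y_{21})² + (y_{11}−x_{21})² − 1; (x_{11}−y_{21})² + (y_{11}+x_{21})² − 1; (x_{12}+y_{22})² + (y_{12}−x_{22})² − 1; (x_{12}−y_{22})² + (y_{12}+x_{22})² − 1 is the unit ideal of R; equivalently, the constant 1/2 belongs to this ideal. -/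

import Mathlib

open scoped BigOperators

/-- The polynomial ring `ℝ[x_{11}, x_{12}, x_{21}, x_{22}, y_{11}, y_{12}, y_{21}, y_{22}]`:
the left summand indexes the `x` variables and the right summand the `y` variables. -/
abbrev R8 := MvPolynomial ((Fin 2 × Fin 2) ⊕ (Fin 2 × Fin 2)) ℝ

noncomputable def xv (i j : Fin 2) : R8 := MvPolynomial.X (Sum.inl (i, j))

noncomputable def yv (i j : Fin 2) : R8 := MvPolynomial.X (Sum.inr (i, j))

/-- The fourteen generators of the ideal `M₄^{2}`. -/
noncomputable def gens14 : Set R8 :=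
  { xv 0 0 * xv 0 1 + yv 0 0 * yv 0 1 + xv 1 0 * xv 1 1 + yv 1 0 * yv 1 1,
    xv 0 0 * yv 0 1 - xv 0 1 * yv 0 0 + xv 1 0 * yv 1 1 - xv 1 1 * yv 1 0,
    xv 0 0 ^ 2 + yv 0 0 ^ 2 - MvPolynomial.C (1 / 2),
    xv 0 1 ^ 2 + yv 0 1 ^ 2 - MvPolynomial.C (1 / 2),
    xv 1 0 ^ 2 + yv 1 0 ^ 2 - MvPolynomial.C (1 / 2),
    xv 1 1 ^ 2 + yv 1 1 ^ 2 - MvPolynomial.C (1 / 2),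
    (xv 0 0 + xv 1 0) ^ 2 + (yv 0 0 + yv 1 0) ^ 2 - 1,
    (xv 0 0 - xv 1 0) ^ 2 + (yv 0 0 - yv 1 0) ^ 2 - 1,
    (xv 0 1 + xv 1 1) ^ 2 + (yv 0 1 + yv 1 1) ^ 2 - 1,
    (xv 0 1 - xv 1 1) ^ 2 + (yv 0 1 - yv 1 1) ^ 2 - 1,
    (xv 0 0 + yv 1 0) ^ 2 + (yv 0 0 - xv 1 0) ^ 2 - 1,
    (xv 0 0 - yv 1 0) ^ 2 + (yv 0 0 + xv 1 0) ^ 2 - 1,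
    (xv 0 1 + yv 1 1) ^ 2 + (yv 0 1 - xv 1 1) ^ 2 - 1,
    (xv 0 1 - yv 1 1) ^ 2 + (yv 0 1 + xv 1 1) ^ 2 - 1 }

/-!
Only six generators are needed. Put `z = x₁₁ + i y₁₁` and `w = x₂₁ + i y₂₁`. By polarization,
`|z + w|² - |z - w|² = 4 Re (z w̄)` and `|z - i w|² - |z + i w|² = 4 Im (z w̄)`, so the unit-norm
generators put `4 Re (z w̄)` and `4 Im (z w̄)` into the ideal, hence also `16 |z|² |w|² = 16 |z w̄|²`.
Modulo the ideal `|z|² ≡ |w|² ≡ 1/2`, so the unit `16 · (1/2)² = 4` lies in it.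
-/

theorem sixteen_mul_sq_mem_of_polarization {A : Type*} [CommRing A] {I : Ideal A}
    {a b c d u : A} (hz : a ^ 2 + b ^ 2 - u ∈ I) (hw : c ^ 2 + d ^ 2 - u ∈ I)
    (hadd : (a + c) ^ 2 + (b + d) ^ 2 - 1 ∈ I) (hsub : (a - c) ^ 2 + (b - d) ^ 2 - 1 ∈ I)
    (hadd_rot : (a + d) ^ 2 + (b - c) ^ 2 - 1 ∈ I)
    (hsub_rot : (a - d) ^ 2 + (b + c) ^ 2 - 1 ∈ I) :
    16 * u ^ 2 ∈ I := by
  have hre : 4 * (a * c + b * d) ∈ I := by convert I.sub_mem hadd hsub using 1; ring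
  have him : 4 * (a * d - b * c) ∈ I := by convert I.sub_mem hadd_rot hsub_rot using 1; ring
  have key : 16 * u ^ 2 = (4 * (a * c + b * d)) ^ 2 + (4 * (a * d - b * c)) ^ 2
      - 16 * (c ^ 2 + d ^ 2) * (a ^ 2 + b ^ 2 - u) - 16 * u * (c ^ 2 + d ^ 2 - u) := by ring
  rw [key]
  exact I.sub_mem (I.sub_mem (I.add_mem (I.pow_mem_of_mem hre 2 two_pos)
    (I.pow_mem_of_mem him 2 two_pos)) (I.mul_mem_left _ hz)) (I.mul_mem_left _ hw)

theorem M4_is_unit_ideal :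
    Ideal.span gens14 = ⊤ ∧ MvPolynomial.C ((1 : ℝ) / 2) ∈ Ideal.span gens14 := by
  have hmem : 16 * MvPolynomial.C ((1 : ℝ) / 2) ^ 2 ∈ Ideal.span gens14 :=
    sixteen_mul_sq_mem_of_polarization (a := xv 0 0) (b := yv 0 0) (c := xv 1 0) (d := yv 1 0)
      (Ideal.subset_span (by simp [gens14])) (Ideal.subset_span (by simp [gens14]))
      (Ideal.subset_span (by simp [gens14])) (Ideal.subset_span (by simp [gens14]))
      (Ideal.subset_span (by simp [gens14])) (Ideal.subset_span (by simp [gens14]))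
  have hunit : IsUnit (16 * MvPolynomial.C ((1 : ℝ) / 2) ^ 2 : R8) := by
    rw [← map_ofNat MvPolynomial.C, ← map_pow, ← map_mul]
    exact (isUnit_iff_ne_zero.mpr (by norm_num)).map MvPolynomial.C
  have htop := Ideal.eq_top_of_isUnit_mem _ hmem hunit
  exact ⟨htop, htop ▸ Submodule.mem_top⟩
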